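/- arXiv:1907.11633 — 2 statements merged into one kernel-verified Lean document; each statement's English description precedes it below -/
import Mathlib

section
/- For every ε > 0 and x ∈ ℝ with x ≠ 0, the conjugate Poisson kernel satisfies Q_ε(x) = (1/π) ∫_0^∞ (1/x) 𝟙_{{|x| > εy}} · (2y/(1+y²)²) dy. Consequently, for f ∈ 𝒮(ℝ) ⊗ X and x ∈ ℝ, Q_ε f(x) = ∫_0^∞ H_{εy} f(x) · (2y/(1+y²)²) dy. -/
open MeasureTheory Filter Topology
open scoped ENNReal

noncomputable section

/-- q-variation seminorm over an index set `Z ⊆ ℝ`. -/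
def vqVar {X : Type*} [NormedAddCommGroup X] (q : ℝ) (Z : Set ℝ) (a : ℝ → X) : ℝ≥0∞ :=
  ⨆ (J : ℕ) (t : ℕ → ℝ) (_ : StrictMonoOn t (Set.Iic J)) (_ : ∀ j ≤ J, t j ∈ Z),
    (∑ j ∈ Finset.range J, ((‖a (t (j + 1)) - a (t j)‖₊ : ℝ≥0∞)) ^ q) ^ (1 / q)

/-- q-variation seminorm of an ℕ-indexed family. -/
def vqVarNat {X : Type*} [NormedAddCommGroup X] (q : ℝ) (a : ℕ → X) : ℝ≥0∞ :=
  ⨆ (J : ℕ) (t : ℕ → ℕ) (_ : StrictMonoOn t (Set.Iic J)),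
    (∑ j ∈ Finset.range J, ((‖a (t (j + 1)) - a (t j)‖₊ : ℝ≥0∞)) ^ q) ^ (1 / q)

/-- A Banach space `X` is of martingale cotype `q`. -/
def MartingaleCotype (X : Type*) [NormedAddCommGroup X] [NormedSpace ℝ X] [CompleteSpace X]
    (q : ℝ) : Prop :=
  ∃ C : ℝ, 0 < C ∧
    ∀ (Ω : Type) (mΩ : MeasurableSpace Ω) (μ : Measure Ω), IsProbabilityMeasure μ →
      ∀ (ℱ : Filtration ℕ mΩ) (f : Ω → X), MemLp f (ENNReal.ofReal q) μ →
        (∑' n : ℕ,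
            (eLpNorm (fun ω => MeasureTheory.condExp (ℱ n) μ f ω - (if n = 0 then 0 else MeasureTheory.condExp (ℱ (n - 1)) μ f ω))
              (ENNReal.ofReal q) μ) ^ q)
          ≤ ENNReal.ofReal C * (eLpNorm f (ENNReal.ofReal q) μ) ^ q

/-- A Banach space `X` has the UMD property. -/
def UMDSpace (X : Type*) [NormedAddCommGroup X] [NormedSpace ℝ X] [CompleteSpace X] : Prop :=
  ∀ p : ℝ, 1 < p → ∃ C : ℝ, 0 < C ∧
    ∀ (Ω : Type) (mΩ : MeasurableSpace Ω) (μ : Measure Ω), IsProbabilityMeasure μ →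
      ∀ (ℱ : Filtration ℕ mΩ) (g : ℕ → Ω → X), Martingale g ℱ μ →
        (∀ n, MemLp (g n) (ENNReal.ofReal p) μ) →
        ∀ (N : ℕ) (r : ℕ → ℝ), (∀ n, r n = 1 ∨ r n = -1) →
          eLpNorm (fun ω => ∑ n ∈ Finset.range N, r (n + 1) • (g (n + 1) ω - g n ω))
              (ENNReal.ofReal p) μ
            ≤ ENNReal.ofReal C * eLpNorm (fun ω => g N ω - g 0 ω) (ENNReal.ofReal p) μ

variable {X : Type*} [NormedAddCommGroup X] [NormedSpace ℝ X] [CompleteSpace X]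

/-- Central averaging operator on ℝ. -/
def avgOp (f : ℝ → X) (t : ℝ) (x : ℝ) : X :=
  (1 / (2 * t)) • ∫ y in Set.Ioo (-t) t, f (x - y)

/-- Truncated Hilbert transform. -/
def truncHilbert (f : ℝ → X) (ε : ℝ) (x : ℝ) : X :=
  (Real.pi)⁻¹ • ∫ y in {y : ℝ | ε < |y|}, y⁻¹ • f (x - y)

/-- Doubly truncated Hilbert transform. -/
def truncHilbert2 (f : ℝ → X) (ε R : ℝ) (x : ℝ) : X :=
  (Real.pi)⁻¹ • ∫ y in {y : ℝ | ε < |y| ∧ |y| < R}, y⁻¹ • f (x - y)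

/-- Poisson integral on ℝ: `P_ε f`. -/
def poissonOp (f : ℝ → X) (ε : ℝ) (x : ℝ) : X :=
  ∫ y : ℝ, ((Real.pi)⁻¹ * ε / (ε ^ 2 + (x - y) ^ 2)) • f y

/-- Conjugate Poisson integral on ℝ: `Q_ε f`. -/
def conjPoissonOp (f : ℝ → X) (ε : ℝ) (x : ℝ) : X :=
  ∫ y : ℝ, ((Real.pi)⁻¹ * (x - y) / (ε ^ 2 + (x - y) ^ 2)) • f y

/-- Poisson kernel of the unit disc (real form): `∑_{n∈ℤ} e^{-t|n|} e^{2πinθ}`. -/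
def circPoissonKernel (t θ : ℝ) : ℝ :=
  ∑' n : ℤ, Real.exp (-t * |(n : ℝ)|) * Real.cos (2 * Real.pi * n * θ)

/-- Poisson integral on the circle (parametrized by `[0,1]`). -/
def circPoissonOp (f : ℝ → X) (t : ℝ) (ξ : ℝ) : X :=
  ∫ θ in Set.Ioc (0 : ℝ) 1, circPoissonKernel t (ξ - θ) • f θ

/-- Dilated convolution `Φ_t * f` with a scalar kernel. -/
def dilConv (Φ : ℝ → ℝ) (f : ℝ → X) (t : ℝ) (x : ℝ) : X :=
  ∫ y : ℝ, (t⁻¹ * Φ (y / t)) • f (x - y)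

/-- `f ∈ 𝒮(ℝ) ⊗ X`. -/
def InSchwartzTensor (f : ℝ → X) : Prop :=
  ∃ (n : ℕ) (φ : Fin n → SchwartzMap ℝ ℝ) (b : Fin n → X),
    ∀ x, f x = ∑ k, φ k x • b k

end

/-!
Since `∫₀^c 2t/(1+t²)² dt = c²/(1+c²)`, integrating the weight `w(t) = 2t/(1+t²)²` over
`{t > 0 | εt < |u|} = (0, |u|/ε)` gives `u²/(ε²+u²)`; multiplying by `1/(πu)` shows that the
conjugate Poisson kernel is the layer-cake average `Q_ε(u) = ∫₀^∞ w(t) K_{εt}(u) dt` of the kernels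
`K_s(u) = 𝟙_{|u|>s}/(πu)` of the truncated Hilbert transforms. Integrating against `f(x - u)` and
exchanging the integrals, which is legitimate because `|w(t) K_{εt}(u)| ≤ 2/(πε(1+t²))` for `t > 0`,
gives `Q_ε f(x) = ∫₀^∞ w(t) H_{εt} f(x) dt` for every integrable `f`.
-/

open Real Set

lemma integral_Ioo_two_mul_div_one_add_sq_sq {c : ℝ} (hc : 0 ≤ c) :
    ∫ t in Ioo 0 c, 2 * t / (1 + t ^ 2) ^ 2 = c ^ 2 / (1 + c ^ 2) := by
  rw [← integral_Ioc_eq_integral_Ioo, ← intervalIntegral.integral_of_le hc]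
  have hderiv : ∀ t ∈ uIcc 0 c,
      HasDerivAt (fun t : ℝ => -(1 + t ^ 2)⁻¹) (2 * t / (1 + t ^ 2) ^ 2) t := by
    intro t _
    have h := (((hasDerivAt_pow 2 t).const_add 1).inv (by positivity)).neg
    exact h.congr_deriv (by push_cast; ring)
  have hcont : Continuous fun t : ℝ => 2 * t / (1 + t ^ 2) ^ 2 :=
    by fun_prop (disch := intro t; positivity)
  rw [intervalIntegral.integral_eq_sub_of_hasDerivAt hderiv
    (hcont.intervalIntegrable _ _)]
  field_simp
  ring

lemma integral_Ioi_indicator_two_mul_div_one_add_sq_sq {ε : ℝ} (hε : 0 < ε) {a : ℝ}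
    (ha : 0 ≤ a) :
    ∫ t in Ioi 0, {t : ℝ | ε * t < a}.indicator (fun t => 2 * t / (1 + t ^ 2) ^ 2) t
      = a ^ 2 / (ε ^ 2 + a ^ 2) := by
  have hS : MeasurableSet {t : ℝ | ε * t < a} := measurableSet_lt (by fun_prop) measurable_const
  have hset : {t : ℝ | ε * t < a} ∩ Ioi 0 = Ioo 0 (a / ε) := by
    ext t
    simp only [mem_inter_iff, mem_ofPred_eq, mem_Ioi, mem_Ioo, lt_div_iff₀ hε, mul_comm ε]
    exact and_comm
  rw [integral_indicator hS, Measure.restrict_restrict hS, hset,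
    integral_Ioo_two_mul_div_one_add_sq_sq (by positivity)]
  field_simp

noncomputable def hilbertKernel (s u : ℝ) : ℝ := if s < |u| then π⁻¹ * u⁻¹ else 0

lemma measurable_hilbertKernel : Measurable (Function.uncurry hilbertKernel) :=
  Measurable.ite (measurableSet_lt measurable_fst measurable_snd.abs) (by fun_prop)
    measurable_const

lemma abs_hilbertKernel_le {s : ℝ} (hs : 0 < s) (u : ℝ) : |hilbertKernel s u| ≤ π⁻¹ * s⁻¹ := by
  unfold hilbertKernel
  split_ifs with h
  · rw [abs_mul, abs_inv, abs_of_pos pi_pos, abs_inv]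
    gcongr
  · simp only [abs_zero]
    positivity

lemma conjPoissonKernel_eq_integral_hilbertKernel {ε : ℝ} (hε : 0 < ε) (u : ℝ) :
    π⁻¹ * u / (ε ^ 2 + u ^ 2)
      = ∫ t in Ioi 0, 2 * t / (1 + t ^ 2) ^ 2 * hilbertKernel (ε * t) u := by
  have hK : ∀ t, 2 * t / (1 + t ^ 2) ^ 2 * hilbertKernel (ε * t) u
      = {t : ℝ | ε * t < |u|}.indicator (fun t => 2 * t / (1 + t ^ 2) ^ 2) t * (π⁻¹ * u⁻¹) := by
    intro t
    by_cases h : ε * t < |u| <;> simp [hilbertKernel, h]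
  simp_rw [hK]
  rw [integral_mul_const, integral_Ioi_indicator_two_mul_div_one_add_sq_sq hε (abs_nonneg u),
    sq_abs]
  rcases eq_or_ne u 0 with rfl | hu
  · simp
  · field_simp

section

variable {E : Type*} [NormedAddCommGroup E] [NormedSpace ℝ E]

lemma truncHilbert_eq_integral_hilbertKernel [CompleteSpace E] (f : ℝ → E) (s x : ℝ) :
    truncHilbert f s x = ∫ u, hilbertKernel s u • f (x - u) := by
  have hS : MeasurableSet {u : ℝ | s < |u|} := measurableSet_lt measurable_const measurable_abs
  rw [truncHilbert, ← integral_smul, ← integral_indicator hS]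
  congr 1 with u
  by_cases h : s < |u| <;> simp [hilbertKernel, h, smul_smul]

lemma conjPoissonOp_eq_integral_sub [CompleteSpace E] (f : ℝ → E) (ε x : ℝ) :
    conjPoissonOp f ε x = ∫ u, (π⁻¹ * u / (ε ^ 2 + u ^ 2)) • f (x - u) := by
  rw [conjPoissonOp, ← integral_sub_left_eq_self _ volume x]
  simp

lemma abs_weight_mul_hilbertKernel_le {ε t : ℝ} (hε : 0 < ε) (ht : 0 < t) (u : ℝ) :
    |2 * t / (1 + t ^ 2) ^ 2 * hilbertKernel (ε * t) u| ≤ 2 / (π * ε) * (1 + t ^ 2)⁻¹ := by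
  have hw : 0 ≤ 2 * t / (1 + t ^ 2) ^ 2 := by positivity
  calc |2 * t / (1 + t ^ 2) ^ 2 * hilbertKernel (ε * t) u|
      ≤ 2 * t / (1 + t ^ 2) ^ 2 * (π⁻¹ * (ε * t)⁻¹) := by
        rw [abs_mul, abs_of_nonneg hw]
        exact mul_le_mul_of_nonneg_left (abs_hilbertKernel_le (by positivity) u) hw
    _ = 2 / (π * ε) * ((1 + t ^ 2) ^ 2)⁻¹ := by field_simp
    _ ≤ 2 / (π * ε) * (1 + t ^ 2)⁻¹ := by
        gcongr
        exact le_self_pow₀ (by nlinarith) two_ne_zero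

lemma integrable_weight_mul_hilbertKernel_smul {ε : ℝ} (hε : 0 < ε) {g : ℝ → E}
    (hg : Integrable g) :
    Integrable
      (fun p : ℝ × ℝ => (2 * p.1 / (1 + p.1 ^ 2) ^ 2 * hilbertKernel (ε * p.1) p.2) • g p.2)
      ((volume.restrict (Ioi 0)).prod volume) := by
  have hbound : Integrable (fun p : ℝ × ℝ => 2 / (π * ε) * (1 + p.1 ^ 2)⁻¹ * ‖g p.2‖)
      ((volume.restrict (Ioi 0)).prod volume) :=
    (integrable_inv_one_add_sq.const_mul _).restrict.mul_prod hg.norm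
  have hK :
      Measurable fun p : ℝ × ℝ => 2 * p.1 / (1 + p.1 ^ 2) ^ 2 * hilbertKernel (ε * p.1) p.2 :=
    (by fun_prop : Measurable fun p : ℝ × ℝ => 2 * p.1 / (1 + p.1 ^ 2) ^ 2).mul
      (measurable_hilbertKernel.comp (by fun_prop : Measurable fun p : ℝ × ℝ => (ε * p.1, p.2)))
  have hg_snd : AEStronglyMeasurable (fun p : ℝ × ℝ => g p.2)
      ((volume.restrict (Ioi 0)).prod volume) :=
    hg.aestronglyMeasurable.comp_quasiMeasurePreserving Measure.quasiMeasurePreserving_snd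
  refine hbound.mono' (hK.aestronglyMeasurable.smul hg_snd) ?_
  filter_upwards [Measure.quasiMeasurePreserving_fst.ae (ae_restrict_mem measurableSet_Ioi)]
    with p hp
  rw [norm_smul, Real.norm_eq_abs]
  exact mul_le_mul_of_nonneg_right (abs_weight_mul_hilbertKernel_le hε hp p.2) (norm_nonneg _)

lemma integral_conjPoissonKernel_smul {ε : ℝ} (hε : 0 < ε) [CompleteSpace E] {g : ℝ → E}
    (hg : Integrable g) :
    ∫ u, (π⁻¹ * u / (ε ^ 2 + u ^ 2)) • g u
      = ∫ t in Ioi 0, (2 * t / (1 + t ^ 2) ^ 2) • ∫ u, hilbertKernel (ε * t) u • g u := by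
  calc ∫ u, (π⁻¹ * u / (ε ^ 2 + u ^ 2)) • g u
      = ∫ u, ∫ t in Ioi 0, (2 * t / (1 + t ^ 2) ^ 2 * hilbertKernel (ε * t) u) • g u := by
        simp_rw [integral_smul_const, ← conjPoissonKernel_eq_integral_hilbertKernel hε]
    _ = ∫ t in Ioi 0, ∫ u, (2 * t / (1 + t ^ 2) ^ 2 * hilbertKernel (ε * t) u) • g u :=
        (integral_integral_swap (integrable_weight_mul_hilbertKernel_smul hε hg)).symm
    _ = ∫ t in Ioi 0, (2 * t / (1 + t ^ 2) ^ 2) • ∫ u, hilbertKernel (ε * t) u • g u := by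
        simp_rw [mul_smul, integral_smul]

lemma conjPoissonOp_eq_integral_truncHilbert [CompleteSpace E] {ε : ℝ} (hε : 0 < ε) {f : ℝ → E}
    (hf : Integrable f) (x : ℝ) :
    conjPoissonOp f ε x
      = ∫ t in Ioi 0, (2 * t / (1 + t ^ 2) ^ 2) • truncHilbert f (ε * t) x := by
  simp_rw [conjPoissonOp_eq_integral_sub, truncHilbert_eq_integral_hilbertKernel]
  exact integral_conjPoissonKernel_smul hε (hf.comp_sub_left x)

lemma InSchwartzTensor.integrable [CompleteSpace E] {f : ℝ → E} (hf : InSchwartzTensor f) :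
    Integrable f := by
  obtain ⟨n, φ, b, hfb⟩ := hf
  rw [funext hfb]
  exact integrable_finsetSum _ fun k _ => (φ k).integrable.smul_const (b k)

end

/-- the integral representation of the conjugate Poisson kernel, and the
resulting representation of `Q_ε f` as an average of truncated Hilbert transforms. -/
theorem stmt_13 {X : Type*} [NormedAddCommGroup X] [NormedSpace ℝ X] [CompleteSpace X]
    (ε : ℝ) (hε : 0 < ε) :
    (∀ x : ℝ, x ≠ 0 →
      (Real.pi)⁻¹ * x / (ε ^ 2 + x ^ 2)
        = (Real.pi)⁻¹ * ∫ y in Set.Ioi (0 : ℝ),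
            (Set.indicator {y : ℝ | ε * y < |x|} (fun _ => 1 / x) y) *
              (2 * y / (1 + y ^ 2) ^ 2)) ∧
    ∀ f : ℝ → X, InSchwartzTensor f → ∀ x : ℝ,
      conjPoissonOp f ε x
        = ∫ y in Set.Ioi (0 : ℝ), (2 * y / (1 + y ^ 2) ^ 2) • truncHilbert f (ε * y) x := by
  refine ⟨fun x _ => ?_, fun f hf x => conjPoissonOp_eq_integral_truncHilbert hε hf.integrable x⟩
  rw [conjPoissonKernel_eq_integral_hilbertKernel hε, ← integral_const_mul]
  congr 1 with y
  by_cases h : ε * y < |x| <;> simp [hilbertKernel, h]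
  ring
end

section
/- Let X be a Banach space, 2 ≤ q < ∞, and f ∈ L^p(ℝ; X) for some 1 < p < ∞. Then for every x ∈ ℝ, the pointwise estimate V_q(Q_ε f(x) : ε > 0) ≤ ∫_0^∞ V_q(H_ε f(x) : ε > 0) · (2y/(1+y²)²) dy = V_q(H_ε f(x) : ε > 0) holds (using that ∫_0^∞ 2y/(1+y²)² dy = 1), whenever the truncated Hilbert transforms H_ε f(x) are defined for all ε > 0. -/
open MeasureTheory Filter Topology
open scoped ENNReal

/-!
Put `w(u) = 2u / (1 + u²)²`. Since `w = d/du (-(1 + u²)⁻¹)`, we have `∫₀^∞ w = 1` and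
`∫₀^{|y|/a} w = y² / (a² + y²)`; multiplying the Hilbert kernel `y⁻¹` by the latter gives the
conjugate Poisson kernel `y / (a² + y²)`, so Fubini yields `Q_a f(x) = ∫₀^∞ w(u) H_{au} f(x) du`.
Thus `ε ↦ Q_ε f(x)` is a `w`-average of the dilated families `ε ↦ H_{εu} f(x)`, each of which has
`q`-variation at most that of `ε ↦ H_ε f(x)`, and Minkowski's inequality in `ℓ^q` (the norm of a
Bochner integral with values in `PiLp q`) lets the variation pass through the average.
-/

open Set

theorem sum_enorm_integral_rpow_le_lintegral {α ι X : Type*} [MeasurableSpace α] [Fintype ι]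
    [NormedAddCommGroup X] [NormedSpace ℝ X] [CompleteSpace X] {μ : Measure α} {q : ℝ}
    (hq : 1 ≤ q) {G : ι → α → X} (hG : ∀ i, Integrable (G i) μ) :
    (∑ i, ‖∫ u, G i u ∂μ‖ₑ ^ q) ^ (1 / q) ≤ ∫⁻ u, (∑ i, ‖G i u‖ₑ ^ q) ^ (1 / q) ∂μ := by
  have : Fact (1 ≤ ENNReal.ofReal q) := ⟨ENNReal.one_le_ofReal.mpr hq⟩
  have hq' : (ENNReal.ofReal q).toReal = q := ENNReal.toReal_ofReal (by linarith)
  have enorm_eq (v : PiLp (ENNReal.ofReal q) (fun _ : ι => X)) :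
      ‖v‖ₑ = (∑ i, ‖v i‖ₑ ^ q) ^ (1 / q) := by
    rw [enorm_eq_nnnorm, PiLp.nnnorm_eq_sum ENNReal.ofReal_ne_top, hq',
      ENNReal.coe_rpow_of_nonneg _ (by positivity), ENNReal.ofNNReal_finsetSum]
    simp_rw [ENNReal.coe_rpow_of_nonneg _ (by linarith : (0:ℝ) ≤ q), enorm_eq_nnnorm]
  set H : α → PiLp (ENNReal.ofReal q) (fun _ : ι => X) := fun u => WithLp.toLp _ (fun i => G i u)
  have hint : ∀ i, ∫ u, G i u ∂μ = (∫ u, H u ∂μ) i := fun i =>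
    (eval_integral_piLp (f := H) hG i).symm
  calc (∑ i, ‖∫ u, G i u ∂μ‖ₑ ^ q) ^ (1 / q) = ‖∫ u, H u ∂μ‖ₑ := by simp_rw [hint, enorm_eq]
    _ ≤ ∫⁻ u, ‖H u‖ₑ ∂μ := enorm_integral_le_lintegral_enorm H
    _ = ∫⁻ u, (∑ i, ‖G i u‖ₑ ^ q) ^ (1 / q) ∂μ := by simp_rw [enorm_eq]; rfl

theorem sum_mul_rpow_rpow_one_div {ι : Type*} (s : Finset ι) {q : ℝ} (hq : 0 < q) (c : ℝ≥0∞)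
    (x : ι → ℝ≥0∞) : (∑ i ∈ s, (c * x i) ^ q) ^ (1 / q) = c * (∑ i ∈ s, x i ^ q) ^ (1 / q) := by
  simp_rw [ENNReal.mul_rpow_of_nonneg _ _ hq.le, ← Finset.mul_sum,
    ENNReal.mul_rpow_of_nonneg _ _ (one_div_nonneg.mpr hq.le), ← ENNReal.rpow_mul,
    mul_one_div_cancel hq.ne', ENNReal.rpow_one]

section Variation
variable {X : Type*} [NormedAddCommGroup X]

theorem le_vqVar {q : ℝ} {Z : Set ℝ} (a : ℝ → X) {J : ℕ} {t : ℕ → ℝ}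
    (ht : StrictMonoOn t (Iic J)) (htZ : ∀ j ≤ J, t j ∈ Z) :
    (∑ j ∈ Finset.range J, ‖a (t (j + 1)) - a (t j)‖ₑ ^ q) ^ (1 / q) ≤ vqVar q Z a :=
  le_iSup_of_le J <| le_iSup_of_le t <| le_iSup_of_le ht <| le_iSup_of_le htZ le_rfl

variable [NormedSpace ℝ X] [CompleteSpace X]

theorem vqVar_integral_dilation_le {μ : Measure ℝ} {q : ℝ} (hq : 1 ≤ q) {ψ : ℝ → ℝ}
    (hμ : ∀ᵐ u ∂μ, 0 < u) (hψ : ∀ᵐ u ∂μ, 0 ≤ ψ u) (hψ1 : ∫ u, ψ u ∂μ = 1) {a b : ℝ → X}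
    (hb : ∀ ε, 0 < ε → Integrable (fun u => ψ u • b (ε * u)) μ)
    (ha : ∀ ε, 0 < ε → a ε = ∫ u, ψ u • b (ε * u) ∂μ) :
    vqVar q (Ioi 0) a ≤ vqVar q (Ioi 0) b := by
  have hq0 : 0 < q := by linarith
  refine iSup_le fun J => iSup_le fun t => iSup_le fun ht => iSup_le fun htpos => ?_
  set G : Fin J → ℝ → X := fun j u => ψ u • b (t (j + 1) * u) - ψ u • b (t j * u)
  have hG : ∀ j, Integrable (G j) μ := fun j =>
    (hb _ (htpos _ j.isLt)).sub (hb _ (htpos _ j.isLt.le))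
  have hintG : ∀ j : Fin J, ∫ u, G j u ∂μ = a (t (j + 1)) - a (t j) := fun j => by
    rw [integral_sub (hb _ (htpos _ j.isLt)) (hb _ (htpos _ j.isLt.le)),
      ha _ (htpos _ j.isLt), ha _ (htpos _ j.isLt.le)]
  have hpointwise : ∀ᵐ u ∂μ,
      (∑ j, ‖G j u‖ₑ ^ q) ^ (1 / q) ≤ ‖ψ u‖ₑ * vqVar q (Ioi 0) b := by
    filter_upwards [hμ] with u hu
    have hdil : StrictMonoOn (fun j => t j * u) (Iic J) :=
      fun i hi j hj hij => mul_lt_mul_of_pos_right (ht hi hj hij) hu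
    simp_rw [G, ← smul_sub, enorm_smul]
    rw [Fin.sum_univ_eq_sum_range (fun j => (‖ψ u‖ₑ * ‖b (t (j + 1) * u) - b (t j * u)‖ₑ) ^ q),
      sum_mul_rpow_rpow_one_div _ hq0]
    gcongr
    exact le_vqVar b hdil fun j hj => mul_pos (htpos j hj) hu
  have hψint : Integrable ψ μ := Integrable.of_integral_ne_zero (by simp [hψ1])
  have hψmass : ∫⁻ u, ‖ψ u‖ₑ ∂μ = 1 := by
    rw [← ofReal_integral_norm_eq_lintegral_enorm hψint, ← ENNReal.ofReal_one, ← hψ1]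
    congr 1
    refine integral_congr_ae ?_
    filter_upwards [hψ] with u hu
    exact abs_of_nonneg hu
  calc (∑ j ∈ Finset.range J, (‖a (t (j + 1)) - a (t j)‖₊ : ℝ≥0∞) ^ q) ^ (1 / q)
      = (∑ j, ‖∫ u, G j u ∂μ‖ₑ ^ q) ^ (1 / q) := by
        simp_rw [hintG, enorm_eq_nnnorm]
        rw [Fin.sum_univ_eq_sum_range (fun j => (‖a (t (j + 1)) - a (t j)‖₊ : ℝ≥0∞) ^ q)]
    _ ≤ ∫⁻ u, (∑ j, ‖G j u‖ₑ ^ q) ^ (1 / q) ∂μ := sum_enorm_integral_rpow_le_lintegral hq hG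
    _ ≤ ∫⁻ u, ‖ψ u‖ₑ * vqVar q (Ioi 0) b ∂μ := lintegral_mono_ae hpointwise
    _ = vqVar q (Ioi 0) b := by
        rw [lintegral_mul_const'' _ hψint.aestronglyMeasurable.enorm, hψmass, one_mul]

end Variation

noncomputable def conjPoissonWeight (u : ℝ) : ℝ := 2 * u / (1 + u ^ 2) ^ 2

theorem continuous_conjPoissonWeight : Continuous conjPoissonWeight :=
  (continuous_const.mul continuous_id).div (by fun_prop) fun u => by positivity

theorem hasDerivAt_neg_inv_one_add_sq (u : ℝ) :
    HasDerivAt (fun v : ℝ => -(1 + v ^ 2)⁻¹) (conjPoissonWeight u) u := by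
  have h : HasDerivAt (fun v : ℝ => 1 + v ^ 2) (2 * u) u := by
    simpa using (hasDerivAt_pow 2 u).const_add 1
  have h' : HasDerivAt (fun v : ℝ => -(1 + v ^ 2)⁻¹) (-(-(2 * u) / (1 + u ^ 2) ^ 2)) u :=
    (h.inv (by positivity)).neg
  exact h'.congr_deriv (by rw [conjPoissonWeight]; ring)

theorem conjPoissonWeight_nonneg {u : ℝ} (hu : 0 ≤ u) : 0 ≤ conjPoissonWeight u := by
  unfold conjPoissonWeight; positivity

theorem tendsto_neg_inv_one_add_sq_atTop :
    Tendsto (fun v : ℝ => -(1 + v ^ 2)⁻¹) atTop (𝓝 0) := by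
  simpa using (tendsto_inv_atTop_zero.comp
    (tendsto_atTop_add_const_left _ 1 (tendsto_pow_atTop (α := ℝ) two_ne_zero))).neg

theorem integrableOn_conjPoissonWeight : IntegrableOn conjPoissonWeight (Ioi 0) :=
  integrableOn_Ioi_deriv_of_nonneg' (fun u _ => hasDerivAt_neg_inv_one_add_sq u)
    (fun _ hu => conjPoissonWeight_nonneg (le_of_lt hu)) tendsto_neg_inv_one_add_sq_atTop

theorem integral_conjPoissonWeight : ∫ u in Ioi 0, conjPoissonWeight u = 1 := by
  rw [integral_Ioi_of_hasDerivAt_of_nonneg' (fun u _ => hasDerivAt_neg_inv_one_add_sq u)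
    (fun _ hu => conjPoissonWeight_nonneg (le_of_lt hu)) tendsto_neg_inv_one_add_sq_atTop]
  norm_num

theorem integral_Ioo_conjPoissonWeight {c : ℝ} (hc : 0 ≤ c) :
    ∫ u in Ioo 0 c, conjPoissonWeight u = c ^ 2 / (1 + c ^ 2) := by
  rw [← integral_Ioc_eq_integral_Ioo, ← intervalIntegral.integral_of_le hc,
    intervalIntegral.integral_eq_sub_of_hasDerivAt (fun u _ => hasDerivAt_neg_inv_one_add_sq u)
      (continuous_conjPoissonWeight.intervalIntegrable 0 c)]
  field_simp
  ring

theorem integral_indicator_conjPoissonWeight {a : ℝ} (ha : 0 < a) (y : ℝ) :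
    ∫ u in Ioi 0, {u | a * u < |y|}.indicator conjPoissonWeight u = y ^ 2 / (a ^ 2 + y ^ 2) := by
  have hset : {u | a * u < |y|} = Iio (|y| / a) := by
    ext u; simp [lt_div_iff₀ ha, mul_comm]
  rw [hset, integral_indicator measurableSet_Iio, Measure.restrict_restrict measurableSet_Iio,
    Iio_inter_Ioi, integral_Ioo_conjPoissonWeight (by positivity), div_pow, sq_abs]
  field_simp

theorem sq_div_sq_add_sq_smul_inv_smul {X : Type*} [AddCommGroup X] [Module ℝ X] (a y : ℝ)
    (v : X) : (y ^ 2 / (a ^ 2 + y ^ 2)) • y⁻¹ • v = (y / (a ^ 2 + y ^ 2)) • v := by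
  rw [smul_smul]
  rcases eq_or_ne y 0 with rfl | hy
  · simp
  · congr 1; field_simp

section Representation
variable {X : Type*} [NormedAddCommGroup X] [NormedSpace ℝ X]

theorem integrable_div_sq_add_sq_smul {a : ℝ} (ha : 0 < a) {g : ℝ → X}
    (hg₀ : IntegrableOn g (Icc (-1) 1)) (hg_inf : IntegrableOn (fun y => y⁻¹ • g y) {y | 1 < |y|}) :
    Integrable (fun y => (y / (a ^ 2 + y ^ 2)) • g y) := by
  have hcont : Continuous fun y : ℝ => y / (a ^ 2 + y ^ 2) :=
    continuous_id.div (by fun_prop) fun y => by positivity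
  have hcover : Icc (-1) 1 ∪ {y : ℝ | 1 < |y|} = univ := by
    ext y; simp [← abs_le, le_or_gt]
  rw [← integrableOn_univ, ← hcover]
  refine (hg₀.continuousOn_smul hcont.continuousOn isCompact_Icc).union ?_
  have hbdd : Integrable (fun y => (y ^ 2 / (a ^ 2 + y ^ 2)) • y⁻¹ • g y)
      (volume.restrict {y | 1 < |y|}) := by
    have hmeas : Continuous fun y : ℝ => y ^ 2 / (a ^ 2 + y ^ 2) :=
      (continuous_pow 2).div (by fun_prop) fun y => by positivity
    refine hg_inf.bdd_smul 1 hmeas.aestronglyMeasurable (Eventually.of_forall fun y => ?_)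
    rw [Real.norm_of_nonneg (by positivity), div_le_one (by positivity)]
    nlinarith
  simpa only [IntegrableOn, sq_div_sq_add_sq_smul_inv_smul] using hbdd

noncomputable def weightedHilbertIntegrand (a : ℝ) (g : ℝ → X) : ℝ × ℝ → X :=
  {p : ℝ × ℝ | a * p.1 < |p.2|}.indicator fun p => conjPoissonWeight p.1 • p.2⁻¹ • g p.2

theorem weightedHilbertIntegrand_apply (a : ℝ) (g : ℝ → X) (u y : ℝ) :
    weightedHilbertIntegrand a g (u, y)
      = {u | a * u < |y|}.indicator conjPoissonWeight u • y⁻¹ • g y := by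
  by_cases h : a * u < |y| <;> simp [weightedHilbertIntegrand, h]

theorem integral_weightedHilbertIntegrand_snd (a : ℝ) (g : ℝ → X) (u : ℝ) :
    ∫ y, weightedHilbertIntegrand a g (u, y)
      = conjPoissonWeight u • ∫ y in {y | a * u < |y|}, y⁻¹ • g y := by
  have hslice : (fun y => weightedHilbertIntegrand a g (u, y))
      = {y | a * u < |y|}.indicator fun y => conjPoissonWeight u • y⁻¹ • g y := by
    ext y; by_cases h : a * u < |y| <;> simp [weightedHilbertIntegrand, h]
  rw [hslice, integral_indicator (measurableSet_lt measurable_const continuous_abs.measurable),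
    integral_smul]

theorem integral_norm_weightedHilbertIntegrand_fst {a : ℝ} (ha : 0 < a) (g : ℝ → X) (y : ℝ) :
    ∫ u in Ioi 0, ‖weightedHilbertIntegrand a g (u, y)‖ = ‖(y / (a ^ 2 + y ^ 2)) • g y‖ := by
  have hnonneg : ∀ u ∈ Ioi (0 : ℝ), 0 ≤ {u | a * u < |y|}.indicator conjPoissonWeight u :=
    fun u hu => indicator_nonneg (fun _ _ => conjPoissonWeight_nonneg (le_of_lt hu)) u
  rw [← sq_div_sq_add_sq_smul_inv_smul, norm_smul, Real.norm_of_nonneg (by positivity),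
    ← integral_indicator_conjPoissonWeight ha, ← integral_mul_const]
  refine setIntegral_congr_fun measurableSet_Ioi fun u hu => ?_
  rw [weightedHilbertIntegrand_apply, norm_smul, Real.norm_of_nonneg (hnonneg u hu)]

theorem integrable_weightedHilbertIntegrand {a : ℝ} (ha : 0 < a) {g : ℝ → X}
    (hg : AEStronglyMeasurable g) (hgQ : Integrable fun y => (y / (a ^ 2 + y ^ 2)) • g y) :
    Integrable (weightedHilbertIntegrand a g) ((volume.restrict (Ioi 0)).prod volume) := by
  have hmeas : AEStronglyMeasurable (weightedHilbertIntegrand a g)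
      ((volume.restrict (Ioi 0)).prod volume) := by
    refine AEStronglyMeasurable.indicator ?_ (measurableSet_lt (by fun_prop) (by fun_prop))
    exact (continuous_conjPoissonWeight.comp continuous_fst).aestronglyMeasurable.smul
      ((measurable_inv.aestronglyMeasurable.smul hg).comp_snd)
  refine (integrable_prod_iff' hmeas).2 ⟨Eventually.of_forall fun y => ?_, ?_⟩
  · simp_rw [weightedHilbertIntegrand_apply]
    exact (Integrable.indicator integrableOn_conjPoissonWeight
      (measurableSet_lt (by fun_prop) (by fun_prop))).smul_const (y⁻¹ • g y)
  · simpa only [integral_norm_weightedHilbertIntegrand_fst ha] using hgQ.norm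

theorem integrableOn_conjPoissonWeight_smul_integral {a : ℝ} (ha : 0 < a) {g : ℝ → X}
    (hg : AEStronglyMeasurable g) (hgQ : Integrable fun y => (y / (a ^ 2 + y ^ 2)) • g y) :
    IntegrableOn (fun u => conjPoissonWeight u • ∫ y in {y | a * u < |y|}, y⁻¹ • g y) (Ioi 0) := by
  simpa only [IntegrableOn, integral_weightedHilbertIntegrand_snd] using
    (integrable_weightedHilbertIntegrand ha hg hgQ).integral_prod_left

variable [CompleteSpace X]

theorem integral_weightedHilbertIntegrand_fst {a : ℝ} (ha : 0 < a) (g : ℝ → X) (y : ℝ) :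
    ∫ u in Ioi 0, weightedHilbertIntegrand a g (u, y) = (y / (a ^ 2 + y ^ 2)) • g y := by
  simp_rw [weightedHilbertIntegrand_apply]
  rw [integral_smul_const, integral_indicator_conjPoissonWeight ha,
    sq_div_sq_add_sq_smul_inv_smul]

theorem integral_div_sq_add_sq_smul_eq {a : ℝ} (ha : 0 < a) {g : ℝ → X}
    (hg : AEStronglyMeasurable g) (hgQ : Integrable fun y => (y / (a ^ 2 + y ^ 2)) • g y) :
    ∫ y, (y / (a ^ 2 + y ^ 2)) • g y
      = ∫ u in Ioi 0, conjPoissonWeight u • ∫ y in {y | a * u < |y|}, y⁻¹ • g y := by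
  simp_rw [← integral_weightedHilbertIntegrand_fst ha, ← integral_weightedHilbertIntegrand_snd]
  exact (integral_integral_swap (f := fun u y => weightedHilbertIntegrand a g (u, y))
    (integrable_weightedHilbertIntegrand ha hg hgQ)).symm

end Representation

section Subordination
variable {X : Type*} [NormedAddCommGroup X] [NormedSpace ℝ X]

theorem integrableOn_conjPoissonWeight_smul_truncHilbert {a : ℝ} (ha : 0 < a) (f : ℝ → X)
    (x : ℝ) (hf : AEStronglyMeasurable fun y => f (x - y))
    (hfQ : Integrable fun y => (y / (a ^ 2 + y ^ 2)) • f (x - y)) :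
    IntegrableOn (fun u => conjPoissonWeight u • truncHilbert f (a * u) x) (Ioi 0) := by
  simp_rw [truncHilbert, smul_comm (conjPoissonWeight _) Real.pi⁻¹]
  exact (integrableOn_conjPoissonWeight_smul_integral ha hf hfQ).smul Real.pi⁻¹

variable [CompleteSpace X]

theorem conjPoissonOp_eq_integral_truncHilbert_s14 {a : ℝ} (ha : 0 < a) (f : ℝ → X) (x : ℝ)
    (hf : AEStronglyMeasurable fun y => f (x - y))
    (hfQ : Integrable fun y => (y / (a ^ 2 + y ^ 2)) • f (x - y)) :
    conjPoissonOp f a x = ∫ u in Ioi 0, conjPoissonWeight u • truncHilbert f (a * u) x := by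
  have hshift : conjPoissonOp f a x = Real.pi⁻¹ • ∫ y, (y / (a ^ 2 + y ^ 2)) • f (x - y) := by
    rw [conjPoissonOp, ← integral_smul, ← integral_sub_left_eq_self _ volume x]
    simp_rw [sub_sub_cancel, smul_smul, mul_div_assoc]
  simp_rw [hshift, integral_div_sq_add_sq_smul_eq ha hf hfQ, truncHilbert,
    smul_comm (conjPoissonWeight _) Real.pi⁻¹, integral_smul]

end Subordination

/-- pointwise estimate `V_q(Q_ε f(x) : ε > 0) ≤ V_q(H_ε f(x) : ε > 0)`. -/
theorem stmt_14 {X : Type*} [NormedAddCommGroup X] [NormedSpace ℝ X] [CompleteSpace X]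
    (q : ℝ) (hq : 2 ≤ q) (p : ℝ) (hp : 1 < p) (f : ℝ → X)
    (hf : MemLp f (ENNReal.ofReal p) volume) (x : ℝ)
    (hdef : ∀ ε : ℝ, 0 < ε →
      IntegrableOn (fun y : ℝ => y⁻¹ • f (x - y)) {y : ℝ | ε < |y|} volume) :
    vqVar q (Set.Ioi 0) (fun ε => conjPoissonOp f ε x)
      ≤ vqVar q (Set.Ioi 0) (fun ε => truncHilbert f ε x) := by
  have hF : MemLp (fun y => f (x - y)) (ENNReal.ofReal p) volume :=
    hf.comp_measurePreserving (Measure.measurePreserving_sub_left volume x)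
  have hFQ : ∀ a, 0 < a → Integrable fun y => (y / (a ^ 2 + y ^ 2)) • f (x - y) := fun a ha =>
    integrable_div_sq_add_sq_smul ha
      ((hF.locallyIntegrable (ENNReal.one_le_ofReal.mpr hp.le)).integrableOn_isCompact
        isCompact_Icc) (hdef 1 one_pos)
  exact vqVar_integral_dilation_le (by linarith) (ae_restrict_mem measurableSet_Ioi)
    (ae_restrict_of_forall_mem measurableSet_Ioi fun u hu => conjPoissonWeight_nonneg hu.le)
    integral_conjPoissonWeight
    (fun a ha => integrableOn_conjPoissonWeight_smul_truncHilbert ha f x hF.1 (hFQ a ha))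
    (fun a ha => conjPoissonOp_eq_integral_truncHilbert_s14 ha f x hF.1 (hFQ a ha))
end
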